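/- arXiv:1512.02432 — 4 statements merged into one kernel-verified Lean document; each statement's English description precedes it below -/
import Mathlib

section
/- For any complex number z and real numbers ξ = (λ+γ)/2 and ρ = (γ-λ)/2 with 0 < λ < γ, the inequality ρ·|z| < |1 + ξ·z| holds if and only if z lies strictly outside the closed disk in the complex plane whose diameter is the real segment from -1/λ to -1/γ. -/
/-
Both inequalities compare squared norms, and the two differences are proportional:
`|1 + ξ z|² - ρ² |z|²` and `λγ (|z - c|² - r²)` both equal `1 + (λ + γ) Re z + λγ |z|²`,
the real part of `(1 + λ z)(1 + γ z̄)`. Since `λγ > 0`, the two strict inequalities agree.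
-/

lemma norm_one_add_mul_sq_sub (z : ℂ) (lam gam : ℝ) :
    ‖1 + (((lam + gam) / 2 : ℝ) : ℂ) * z‖ ^ 2 - ((gam - lam) / 2 * ‖z‖) ^ 2 =
      1 + (lam + gam) * z.re + lam * gam * ‖z‖ ^ 2 := by
  simp only [mul_pow, Complex.sq_norm, Complex.normSq_apply, Complex.add_re, Complex.add_im,
    Complex.mul_re, Complex.mul_im, Complex.one_re, Complex.one_im, Complex.ofReal_re,
    Complex.ofReal_im]
  ring

lemma mul_norm_sub_sq_sub {lam gam : ℝ} (hlam : lam ≠ 0) (hgam : gam ≠ 0) (z : ℂ) :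
    lam * gam * (‖z - (((-1 / lam - 1 / gam) / 2 : ℝ) : ℂ)‖ ^ 2 - ((1 / lam - 1 / gam) / 2) ^ 2) =
      1 + (lam + gam) * z.re + lam * gam * ‖z‖ ^ 2 := by
  simp only [Complex.sq_norm, Complex.normSq_apply, Complex.sub_re, Complex.sub_im,
    Complex.ofReal_re, Complex.ofReal_im]
  field_simp
  ring

/-- Circle criterion, case `0 < λ < γ`: with ξ = (λ+γ)/2, ρ = (γ-λ)/2,
`ρ|z| < |1 + ξ z|` iff `z` lies strictly outside the closed disk `D[-1/λ, -1/γ]`,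
whose center is `c = (-1/λ - 1/γ)/2` and radius `r = (1/λ - 1/γ)/2`. -/
theorem stmt0 (z : ℂ) (lam gam : ℝ) (hlam : 0 < lam) (hgam : lam < gam)
    (ξ ρ : ℝ) (hξ : ξ = (lam + gam) / 2) (hρ : ρ = (gam - lam) / 2)
    (c r : ℝ) (hc : c = (-1 / lam - 1 / gam) / 2) (hr : r = (1 / lam - 1 / gam) / 2) :
    ρ * ‖z‖ < ‖1 + (ξ : ℂ) * z‖ ↔
      r < ‖z - (c : ℂ)‖ := by
  subst hξ hρ hc hr
  have hgam_pos : 0 < gam := hlam.trans hgam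
  have hρ_nonneg : 0 ≤ (gam - lam) / 2 * ‖z‖ := by
    have : 0 ≤ gam - lam := by linarith
    positivity
  have hr_nonneg : 0 ≤ (1 / lam - 1 / gam) / 2 := by
    have := one_div_le_one_div_of_le hlam hgam.le
    linarith
  rw [← sq_lt_sq₀ hρ_nonneg (norm_nonneg _), ← sq_lt_sq₀ hr_nonneg (norm_nonneg _),
    ← sub_pos, ← sub_pos (a := _ ^ 2), norm_one_add_mul_sq_sub,
    ← mul_norm_sub_sq_sub hlam.ne' hgam_pos.ne', mul_pos_iff_of_pos_left (mul_pos hlam hgam_pos)]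
end

section
/- Let N ≥ 1 and let 0 < α₁ < β₁ < α₂ < β₂ < ⋯ < α_N < β_N be real numbers. Define M(s) = ∏_{i=1}^N (s + α_i)/(s + β_i). Then M admits the partial fraction decomposition M(s) = 1 + Σ_{i=1}^N k_i/(s + β_i), where k_i = (α_i - β_i)·∏_{j≠i} (α_j - β_i)/(β_j - β_i), and every coefficient k_i is strictly negative. -/
/-!
Clearing denominators, the decomposition is the polynomial identity
`∏ (X + αᵢ) = ∏ (X + βᵢ) + ∑ kᵢ ∏_{j≠i} (X + βⱼ)`: both sides are monic of degree `N`, so their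
difference has degree `< N`, and it vanishes at the `N` distinct points `-βᵢ` because `kᵢ` is
exactly the residue `∏ⱼ (αⱼ - βᵢ) / ∏_{j≠i} (βⱼ - βᵢ)`. Interlacing makes every factor
`(αⱼ - βᵢ)/(βⱼ - βᵢ)` with `j ≠ i` positive (numerator and denominator have the sign of `j - i`),
while `αᵢ - βᵢ < 0`.
-/

open Finset Polynomial

section PartialFractions

variable {ι K : Type*} [Field K]

lemma degree_prod_X_add_C (s : Finset ι) (a : ι → K) :
    (∏ i ∈ s, (X + C (a i))).degree = (#s : WithBot ℕ) := by
  simp [degree_prod]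

lemma monic_prod_X_add_C (s : Finset ι) (a : ι → K) : (∏ i ∈ s, (X + C (a i))).Monic :=
  monic_prod_of_monic _ _ fun i _ => monic_X_add_C (a i)

variable [DecidableEq ι]

lemma degree_sum_C_mul_prod_erase_lt (s : Finset ι) (b c : ι → K) :
    (∑ i ∈ s, C (c i) * ∏ j ∈ s.erase i, (X + C (b j))).degree < (#s : WithBot ℕ) := by
  refine (degree_sum_le _ _).trans_lt ((Finset.sup_lt_iff (WithBot.bot_lt_coe _)).mpr
    fun i hi => (degree_mul_le _ _).trans_lt ?_)
  rw [degree_prod_X_add_C, card_erase_of_mem hi]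
  calc (C (c i)).degree + ↑(#s - 1) ≤ 0 + ↑(#s - 1) := add_le_add_left degree_C_le _
    _ < #s := by
      rw [zero_add]
      exact_mod_cast Nat.sub_lt (card_pos.mpr ⟨i, hi⟩) one_pos

theorem prod_X_add_C_eq_add_sum {s : Finset ι} {a b c : ι → K} (hb : Set.InjOn b s)
    (hc : ∀ i ∈ s, c i * ∏ j ∈ s.erase i, (b j - b i) = ∏ j ∈ s, (a j - b i)) :
    ∏ i ∈ s, (X + C (a i)) =
      ∏ i ∈ s, (X + C (b i)) + ∑ i ∈ s, C (c i) * ∏ j ∈ s.erase i, (X + C (b j)) := by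
  have hnb : Set.InjOn (fun i => -b i) s := fun i hi j hj h => hb hi hj (neg_inj.mp h)
  refine eq_of_degree_sub_lt_of_eval_index_eq _ hnb ?_ fun i hi => ?_
  · have hmain :
        (∏ i ∈ s, (X + C (a i)) - ∏ i ∈ s, (X + C (b i))).degree < (#s : WithBot ℕ) := by
      have := degree_sub_lt_left
        ((degree_prod_X_add_C s a).trans (degree_prod_X_add_C s b).symm)
        (monic_prod_X_add_C s a).ne_zero
        ((monic_prod_X_add_C s a).leadingCoeff.trans (monic_prod_X_add_C s b).leadingCoeff.symm)
      rwa [degree_prod_X_add_C] at this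
    rw [← sub_sub]
    exact (degree_sub_le _ _).trans_lt (max_lt hmain (degree_sum_C_mul_prod_erase_lt s b c))
  · have hS : (∑ k ∈ s, C (c k) * ∏ j ∈ s.erase k, (X + C (b j))).eval (-b i) =
        c i * ∏ j ∈ s.erase i, (b j - b i) := by
      rw [eval_finsetSum, sum_eq_single_of_mem i hi]
      · simp [eval_prod, neg_add_eq_sub]
      · intro k _ hki
        simp only [eval_mul, eval_prod, eval_add, eval_X, eval_C]
        exact mul_eq_zero_of_right _
          (prod_eq_zero (mem_erase.mpr ⟨Ne.symm hki, hi⟩) (neg_add_cancel _))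
    have hQ : (∏ j ∈ s, (X + C (b j))).eval (-b i) = 0 := by
      rw [eval_prod]
      exact prod_eq_zero hi (by simp)
    rw [eval_add, hQ, hS, hc i hi, zero_add, eval_prod]
    simp [neg_add_eq_sub]

theorem prod_div_eq_one_add_sum {s : Finset ι} {a b c : ι → K} (hb : Set.InjOn b s)
    (hc : ∀ i ∈ s, c i * ∏ j ∈ s.erase i, (b j - b i) = ∏ j ∈ s, (a j - b i))
    {x : K} (hx : ∀ i ∈ s, x + b i ≠ 0) :
    ∏ i ∈ s, (x + a i) / (x + b i) = 1 + ∑ i ∈ s, c i / (x + b i) := by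
  have hQ : ∏ i ∈ s, (x + b i) ≠ 0 := prod_ne_zero_iff.mpr hx
  have h := congrArg (eval x) (prod_X_add_C_eq_add_sum hb hc)
  simp only [eval_prod, eval_add, eval_X, eval_C, eval_finsetSum, eval_mul] at h
  rw [prod_div_distrib, h, add_div, div_self hQ, sum_div]
  refine congrArg _ (sum_congr rfl fun i hi => ?_)
  rw [← mul_prod_erase s _ hi,
    mul_div_mul_right _ _ (prod_ne_zero_iff.mpr fun j hj => hx j (mem_of_mem_erase hj))]

lemma mul_prod_erase_div_mul_prod_erase {s : Finset ι} {a b : ι → K} (hb : Set.InjOn b s)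
    {i : ι} (hi : i ∈ s) :
    (a i - b i) * (∏ j ∈ s.erase i, (a j - b i) / (b j - b i)) * ∏ j ∈ s.erase i, (b j - b i) =
      ∏ j ∈ s, (a j - b i) := by
  rw [mul_assoc, ← prod_mul_distrib, ← mul_prod_erase s _ hi]
  refine congrArg _ (prod_congr rfl fun j hj => div_mul_cancel₀ _ ?_)
  exact sub_ne_zero.mpr fun h => (ne_of_mem_erase hj) (hb (mem_of_mem_erase hj) hi h)

end PartialFractions

lemma strictMono_of_interlacing {ι K : Type*} [Preorder ι] [Preorder K] {α β : ι → K}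
    (hab : ∀ i, α i < β i) (hba : ∀ i j, i < j → β i < α j) : StrictMono β :=
  fun i j hij => (hba i j hij).trans (hab j)

section Interlacing

variable {ι K : Type*} [LinearOrder ι] [Field K] [LinearOrder K] [IsStrictOrderedRing K]
  {α β : ι → K}

lemma div_pos_of_interlacing (hab : ∀ i, α i < β i) (hba : ∀ i j, i < j → β i < α j)
    {i j : ι} (hji : j ≠ i) : 0 < (α j - β i) / (β j - β i) := by
  rcases hji.lt_or_gt with h | h
  · have := hab j
    have := hab i
    have := hba j i h
    exact div_pos_of_neg_of_neg (by linarith) (by linarith)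
  · have := hab j
    have := hba i j h
    exact div_pos (by linarith) (by linarith)

lemma mul_prod_div_neg_of_interlacing [DecidableEq ι] (hab : ∀ i, α i < β i)
    (hba : ∀ i j, i < j → β i < α j) (s : Finset ι) (i : ι) :
    (α i - β i) * ∏ j ∈ s.erase i, (α j - β i) / (β j - β i) < 0 :=
  mul_neg_of_neg_of_pos (sub_neg.mpr (hab i)) <| prod_pos fun _ hj =>
    div_pos_of_interlacing hab hba (ne_of_mem_erase hj)

end Interlacing

theorem stmt7_general (N : ℕ) (α β : Fin N → ℝ)
    (hab : ∀ i, α i < β i)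
    (hba : ∀ i j : Fin N, i < j → β i < α j)
    (k : Fin N → ℝ)
    (hk : ∀ i, k i = (α i - β i) *
      ∏ j ∈ Finset.univ.erase i, (α j - β i) / (β j - β i)) :
    (∀ s : ℂ, (∀ j, s ≠ -(β j : ℂ)) →
        ∏ i, (s + (α i : ℂ)) / (s + (β i : ℂ)) =
          1 + ∑ i, (k i : ℂ) / (s + (β i : ℂ))) ∧
      ∀ i, k i < 0 := by
  have hβ : Function.Injective β := (strictMono_of_interlacing hab hba).injective
  have hres : ∀ i ∈ univ, (k i : ℂ) * ∏ j ∈ univ.erase i, ((β j : ℂ) - β i) =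
      ∏ j, ((α j : ℂ) - β i) := fun i hi => by
    exact_mod_cast hk i ▸ mul_prod_erase_div_mul_prod_erase hβ.injOn hi
  refine ⟨fun s hs => prod_div_eq_one_add_sum (Complex.ofReal_injective.comp hβ).injOn hres
    fun i _ h => hs i ?_,
    fun i => hk i ▸ mul_prod_div_neg_of_interlacing hab hba univ i⟩
  exact eq_neg_of_add_eq_zero_left h

/-- RL partial fraction decomposition: for interlacing parameters
`0 < α₁ < β₁ < ⋯ < α_N < β_N`, the function `M(s) = ∏ (s+αᵢ)/(s+βᵢ)` equals
`1 + Σ kᵢ/(s+βᵢ)` with `kᵢ = (αᵢ-βᵢ)·∏_{j≠i}(αⱼ-βᵢ)/(βⱼ-βᵢ)`, and each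
`kᵢ < 0`. -/
theorem stmt7 (N : ℕ) (hN : 1 ≤ N) (α β : Fin N → ℝ)
    (hpos : ∀ i, 0 < α i)
    (hab : ∀ i, α i < β i)
    (hba : ∀ i j : Fin N, i < j → β i < α j)
    (k : Fin N → ℝ)
    (hk : ∀ i, k i = (α i - β i) *
      ∏ j ∈ Finset.univ.erase i, (α j - β i) / (β j - β i)) :
    (∀ s : ℂ, (∀ j, s ≠ -(β j : ℂ)) →
        ∏ i, (s + (α i : ℂ)) / (s + (β i : ℂ)) =
          1 + ∑ i, (k i : ℂ) / (s + (β i : ℂ))) ∧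
      ∀ i, k i < 0 :=
  stmt7_general N α β hab hba k hk
end

section
/- Let 0 < α₁ < β₁ < ⋯ < α_N < β_N and k_i = (α_i - β_i)·∏_{j≠i} (α_j - β_i)/(β_j - β_i). Then 0 < Σ_{i=1}^N (-k_i)/β_i = 1 - ∏_{i=1}^N (α_i/β_i) < 1. -/
open Finset

/-!
Write `M(x) = ∏ (x + αᵢ)/(x + βᵢ)`. Lagrange interpolation of `∏ (X + αᵢ) - ∏ (X + βᵢ)`, a
polynomial of degree `< N`, at the nodes `-βᵢ` gives the partial fraction decomposition
`M(x) = 1 + Σ kᵢ/(x + βᵢ)`. At `x = 0` this reads `Σ (-kᵢ)/βᵢ = 1 - ∏ αᵢ/βᵢ`, and each factor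
`αᵢ/βᵢ` lies in `(0, 1)`.
-/

open Polynomial Lagrange

variable {K ι : Type*} [Field K] [Fintype ι]

theorem degree_nodal_sub_nodal_lt (a b : ι → K) :
    (nodal univ a - nodal univ b).degree < #(univ : Finset ι) := by
  rw [← degree_nodal (s := univ) (v := a)]
  exact degree_sub_lt_left (by rw [degree_nodal, degree_nodal]) nodal_ne_zero
    (by rw [nodal_monic.leadingCoeff, nodal_monic.leadingCoeff])

variable [DecidableEq ι]

def partialFractionCoeff (α β : ι → K) (i : ι) : K :=
  (α i - β i) * ∏ j ∈ univ.erase i, (α j - β i) / (β j - β i)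

theorem partialFractionCoeff_eq (α β : ι → K) (i : ι) :
    partialFractionCoeff α β i = (∏ j ∈ univ.erase i, (β j - β i)⁻¹) * ∏ j, (α j - β i) := by
  rw [partialFractionCoeff, ← mul_prod_erase univ (fun j => α j - β i) (mem_univ i)]
  simp only [div_eq_mul_inv, prod_mul_distrib]
  ring

theorem prod_div_eq_one_add_sum_partialFractionCoeff {α β : ι → K}
    (hβ : Function.Injective β) {x : K} (hx : ∀ i, x + β i ≠ 0) :
    ∏ i, (x + α i) / (x + β i) = 1 + ∑ i, partialFractionCoeff α β i / (x + β i) := by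
  have hinj : Set.InjOn (-β) (univ : Finset ι) := fun i _ j _ h => hβ (neg_injective h)
  have hxv : ∀ i ∈ (univ : Finset ι), x ≠ (-β) i := fun i _ h =>
    hx i (by rw [h, Pi.neg_apply, neg_add_cancel])
  have hf := congrArg (eval x) (eq_interpolate hinj (degree_nodal_sub_nodal_lt (-α) (-β)))
  rw [eval_interpolate_not_at_node _ hxv] at hf
  have hQ : (nodal univ (-β)).eval x ≠ 0 := eval_nodal_not_at_node hxv
  simp only [eval_sub, eval_nodal_at_node (mem_univ _), sub_zero] at hf
  simp only [eval_nodal, nodalWeight, Pi.neg_apply, sub_neg_eq_add] at hf hQ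
  rw [prod_div_distrib, div_eq_iff hQ, add_mul, one_mul, ← sub_eq_iff_eq_add', hf, mul_comm]
  refine congrArg (· * _) (Finset.sum_congr rfl fun i _ => ?_)
  rw [partialFractionCoeff_eq]
  simp only [neg_add_eq_sub, div_eq_mul_inv]
  ring

/-- With interlacing parameters and the RL partial-fraction coefficients `kᵢ`,
we have `0 < Σ (-kᵢ)/βᵢ = 1 - ∏ αᵢ/βᵢ < 1`. -/
theorem stmt8 (N : ℕ) (hN : 1 ≤ N) (α β : Fin N → ℝ)
    (hpos : ∀ i, 0 < α i)
    (hab : ∀ i, α i < β i)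
    (hba : ∀ i j : Fin N, i < j → β i < α j)
    (k : Fin N → ℝ)
    (hk : ∀ i, k i = (α i - β i) *
      ∏ j ∈ Finset.univ.erase i, (α j - β i) / (β j - β i)) :
    0 < ∑ i, (-(k i)) / β i ∧
      ∑ i, (-(k i)) / β i = 1 - ∏ i, α i / β i ∧
      ∑ i, (-(k i)) / β i < 1 := by
  have hβ : ∀ i, 0 < β i := fun i => (hpos i).trans (hab i)
  have hβinj : Function.Injective β :=
    StrictMono.injective fun i j hij => (hba i j hij).trans (hab j)
  have hk' : k = partialFractionCoeff α β := funext hk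
  have hsum : ∑ i, (-(k i)) / β i = 1 - ∏ i, α i / β i := by
    have h := prod_div_eq_one_add_sum_partialFractionCoeff (α := α) hβinj
      (x := 0) fun i => by simpa using (hβ i).ne'
    simp only [zero_add, ← hk'] at h
    simp only [neg_div, sum_neg_distrib, h]
    ring
  have hprod_pos : 0 < ∏ i, α i / β i := prod_pos fun i _ => div_pos (hpos i) (hβ i)
  have hprod_lt_one : ∏ i, α i / β i < 1 := by
    have : Nonempty (Fin N) := Fin.pos_iff_nonempty.mp hN
    simpa using prod_lt_prod_of_nonempty (fun i _ => div_pos (hpos i) (hβ i))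
      (fun i _ => (div_lt_one (hβ i)).mpr (hab i)) univ_nonempty
  exact ⟨by linarith, hsum, by linarith⟩
end

section
/- Let α ∈ (0, 1] and let p ∈ ℂ with |arg(p)| > απ/2 (principal argument in (-π, π]). Then for every s ∈ ℂ with Re(s) ≥ 0, s^α ≠ p, where s^α denotes the principal power. In particular, a commensurate transfer function F(s^α) whose denominator roots (in the variable w = s^α) all satisfy |arg(w)| > απ/2 has no poles in the closed right half s-plane. -/
open Real Complex

/-- Matignon-type condition: if `0 < α ≤ 1` and `|arg p| > απ/2`, then the
principal power `s^α` never equals `p` for `s` in the closed right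
half-plane. Hence a commensurate transfer function whose denominator roots
(in `w = s^α`) all satisfy `|arg w| > απ/2` has no poles with `Re s ≥ 0`. -/
theorem stmt19 (α : ℝ) (hα0 : 0 < α) (hα1 : α ≤ 1) (p : ℂ)
    (hp : α * π / 2 < |p.arg|) :
    ∀ s : ℂ, 0 ≤ s.re → s ^ (α : ℂ) ≠ p := by
  intro s hs heq
  have hpos : (0:ℝ) < α * π / 2 := by positivity
  by_cases h0 : s = 0
  · subst h0
    rw [Complex.zero_cpow (by exact_mod_cast hα0.ne')] at heq
    rw [← heq, Complex.arg_zero, abs_zero] at hp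
    linarith
  · have hargs : |s.arg| ≤ π / 2 := Complex.abs_arg_le_pi_div_two_iff.mpr hs
    have hcpow : s ^ (α : ℂ) = Complex.exp (Complex.log s * α) :=
      Complex.cpow_def_of_ne_zero h0 _
    have him : (Complex.log s * α).im = α * s.arg := by
      simp [Complex.mul_im, Complex.log_im, mul_comm]
    have hbound : |α * s.arg| ≤ α * π / 2 := by
      rw [abs_mul, abs_of_pos hα0]
      calc α * |s.arg| ≤ α * (π / 2) := by
            exact mul_le_mul_of_nonneg_left hargs hα0.le
        _ = α * π / 2 := by ring
    have hππ : α * π / 2 < π := by nlinarith [Real.pi_pos]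
    have harg : (s ^ (α : ℂ)).arg = α * s.arg := by
      rw [hcpow]
      have h1 : -π < (Complex.log s * α).im := by
        rw [him]; cases' abs_le.mp hbound with h _; linarith
      have h2 : (Complex.log s * α).im ≤ π := by
        rw [him]; cases' abs_le.mp hbound with _ h; linarith
      have := Complex.log_exp h1 h2
      calc (Complex.exp (Complex.log s * α)).arg
          = (Complex.log (Complex.exp (Complex.log s * α))).im := (Complex.log_im _).symm
        _ = α * s.arg := by rw [this, him]
    rw [heq] at harg
    rw [harg] at hp
    exact absurd hbound (not_le.mpr hp)
end
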